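/- For every integer k ≥ 2, the sequence Z defined by Z(0) = 1 and Z(n) = exp_k(0)·b_k(n)/(n−1)! = B_k(n)/(n−1)! for n ≥ 1 is log-concave. -/

import Mathlib

open scoped Nat

/-- The `k`-times iterated exponential function: `expIter 0 = id`,
`expIter (k+1) x = exp (expIter k x)`. -/
noncomputable def expIter : ℕ → ℝ → ℝ
  | 0 => id
  | k + 1 => fun x => Real.exp (expIter k x)

/-- `BellB k n` is the `n`-th derivative of the `k`-times iterated exponential at `0`,
so that `expIter k x = ∑ n, BellB k n * x ^ n / n !`. -/
noncomputable def BellB (k n : ℕ) : ℝ := iteratedDeriv n (expIter k) 0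

/-- The Bell numbers of order `k`: `bellOrd k n = BellB k n / expIter k 0`. -/
noncomputable def bellOrd (k n : ℕ) : ℝ := BellB k n / expIter k 0

/-!
Write `c_k m = B_k(m) / m!` (`bellCoeff k m`) for the Taylor coefficients of `exp_k` and `z_k`
(`oneAddXDeriv (bellCoeff k)`) for those of `1 + x exp_k'(x)`, so that `Z = z_k`.
Differentiating `exp_{k+1} = exp ∘ exp_k` gives `exp_{k+1}' = exp_k' * exp_{k+1}`, i.e.
`(m + 1) c_{k+1}(m + 1) = ∑ z_k(i + 1) c_{k+1}(m - i)`. Such a recursion transfers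
log-concavity from a positive `z` with `z 0 = 1` to `c`: the quantity
`(n + 1)(n + 2)(c_{n+1}^2 - c_n c_{n+2})` is a double sum whose terms pair off into
nonnegative ones, by log-concavity of `z` and, inductively, of `c` below `n`. Then
`z_{k+1} m = m c_{k+1} m` is log-concave too, the first inequality needing
`c_{k+1} 0 = exp_{k+1} 0 ≥ 2`; the induction on `k` starts from `z_1 (m + 1) = 1 / m!`.
-/

open Finset

def LogConcave (a : ℕ → ℝ) : Prop := ∀ n, a n * a (n + 2) ≤ a (n + 1) ^ 2

theorem Finset.sum_sum_nonneg_of_add_swap_nonneg {ι α : Type*} [LinearOrder ι]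
    [AddCommGroup α] [LinearOrder α] [IsOrderedAddMonoid α] (s : Finset ι) (g : ι → ι → α)
    (h : ∀ a ∈ s, ∀ b ∈ s, a ≤ b → 0 ≤ g a b + g b a) :
    0 ≤ ∑ a ∈ s, ∑ b ∈ s, g a b := by
  have hsymm : 0 ≤ ∑ a ∈ s, ∑ b ∈ s, (g a b + g b a) := by
    refine sum_nonneg fun a ha => sum_nonneg fun b hb => ?_
    rcases le_total a b with hab | hba
    · exact h a ha b hb hab
    · rw [add_comm]; exact h b hb a ha hba
  simp only [sum_add_distrib] at hsymm
  rw [sum_comm (f := fun a b => g b a)] at hsymm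
  exact nonneg_add_self_iff.mp hsymm

theorem mul_succ_le_succ_mul_of_logConcave_lt {x : ℕ → ℝ} {N : ℕ} (hx : ∀ m, 0 < x m)
    (hlc : ∀ m < N, x m * x (m + 2) ≤ x (m + 1) ^ 2) {a b : ℕ} (hab : a ≤ b) (hb : b ≤ N) :
    x a * x (b + 1) ≤ x (a + 1) * x b := by
  induction b, hab using Nat.le_induction with
  | base => rw [mul_comm]
  | succ b hab ih =>
    have h1 := mul_le_mul_of_nonneg_left (hlc b (by omega)) (hx a).le
    have h2 := mul_le_mul_of_nonneg_right (ih (by omega)) (hx (b + 1)).le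
    refine le_of_mul_le_mul_right ?_ (hx b)
    nlinarith

theorem LogConcave.mul_succ_le_succ_mul {x : ℕ → ℝ} (hlc : LogConcave x) (hx : ∀ m, 0 < x m)
    {a b : ℕ} (hab : a ≤ b) : x a * x (b + 1) ≤ x (a + 1) * x b :=
  mul_succ_le_succ_mul_of_logConcave_lt (N := b) hx (fun m _ => hlc m) hab le_rfl

/-- The coefficients of `1 + x C'(x)` for `C(x) = ∑ c m x ^ m`. -/
def oneAddXDeriv (c : ℕ → ℝ) : ℕ → ℝ
  | 0 => 1
  | m + 1 => (m + 1) * c (m + 1)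

theorem oneAddXDeriv_succ (c : ℕ → ℝ) (m : ℕ) : oneAddXDeriv c (m + 1) = (m + 1) * c (m + 1) :=
  rfl

theorem oneAddXDeriv_pos {c : ℕ → ℝ} (hc : ∀ m, 0 < c m) : ∀ m, 0 < oneAddXDeriv c m
  | 0 => one_pos
  | m + 1 => mul_pos (by positivity) (hc (m + 1))

section Recursion

variable {z c : ℕ → ℝ}

theorem pos_of_succ_mul_eq_sum (hc0 : 0 < c 0) (hz : ∀ i, 0 < z (i + 1))
    (hrec : ∀ m, (m + 1) * c (m + 1) = ∑ i ∈ range (m + 1), z (i + 1) * c (m - i)) (m : ℕ) :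
    0 < c m := by
  induction m using Nat.strong_induction_on with
  | _ m ih =>
    rcases m with _ | m
    · exact hc0
    have hsum : 0 < (m + 1) * c (m + 1) := by
      rw [hrec m]
      exact sum_pos (fun i hi => mul_pos (hz i) (ih _ (by omega))) nonempty_range_add_one
    exact pos_of_mul_pos_right hsum (by positivity)

theorem sum_range_mul_eq_succ_mul (hz0 : z 0 = 1)
    (hrec : ∀ m, (m + 1) * c (m + 1) = ∑ i ∈ range (m + 1), z (i + 1) * c (m - i)) (m : ℕ) :
    ∑ i ∈ range (m + 1), z i * c (m - i) = (m + 1) * c m := by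
  rcases m with _ | m
  · simp [hz0]
  rw [sum_range_succ', hz0]
  simp only [Nat.add_sub_add_right, Nat.sub_zero]
  rw [← hrec m]
  push_cast
  ring

theorem succ_mul_succ_mul_sub_eq_sum (hz0 : z 0 = 1)
    (hrec : ∀ m, (m + 1) * c (m + 1) = ∑ i ∈ range (m + 1), z (i + 1) * c (m - i)) (n : ℕ) :
    ((n : ℝ) + 1) * (n + 2) * (c (n + 1) ^ 2 - c n * c (n + 2)) =
      ∑ a ∈ range (n + 1), ∑ b ∈ range (n + 2),
        (z (a + 1) * z b - z a * z (b + 1)) * (c (n - a) * c (n + 1 - b)) := by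
  have hB := sum_range_mul_eq_succ_mul hz0 hrec (n + 1)
  have hC := sum_range_mul_eq_succ_mul hz0 hrec n
  calc _ = (∑ a ∈ range (n + 1), z (a + 1) * c (n - a)) *
          (∑ b ∈ range (n + 2), z b * c (n + 1 - b)) -
        (∑ a ∈ range (n + 1), z a * c (n - a)) *
          (∑ b ∈ range (n + 2), z (b + 1) * c (n + 1 - b)) := by
        rw [← hrec n, hB, hC, ← hrec (n + 1)]
        push_cast
        ring
    _ = _ := by
        rw [sum_mul_sum, sum_mul_sum, ← sum_sub_distrib]
        refine sum_congr rfl fun a _ => ?_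
        rw [← sum_sub_distrib]
        exact sum_congr rfl fun b _ => by ring

theorem logConcave_of_succ_mul_eq_sum (hz0 : z 0 = 1) (hz : ∀ j, 0 < z j)
    (hzlc : LogConcave z) (hc : ∀ m, 0 < c m)
    (hrec : ∀ m, (m + 1) * c (m + 1) = ∑ i ∈ range (m + 1), z (i + 1) * c (m - i)) :
    LogConcave c := by
  intro n
  induction n using Nat.strong_induction_on with
  | _ n ih =>
  set g : ℕ → ℕ → ℝ := fun a b =>
    (z (a + 1) * z b - z a * z (b + 1)) * (c (n - a) * c (n + 1 - b))
  have hsquare : 0 ≤ ∑ a ∈ range (n + 1), ∑ b ∈ range (n + 1), g a b := by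
    refine sum_sum_nonneg_of_add_swap_nonneg _ _ fun a _ b hb hab => ?_
    have hbn : b ≤ n := mem_range_succ_iff.mp hb
    have hzab := hzlc.mul_succ_le_succ_mul hz hab
    have hcab := mul_succ_le_succ_mul_of_logConcave_lt hc ih (a := n - b) (b := n - a)
      (by omega) (by omega)
    have hswap : g a b + g b a = (z (a + 1) * z b - z a * z (b + 1)) *
        (c (n - a) * c (n - b + 1) - c (n - b) * c (n - a + 1)) := by
      simp only [g]
      rw [show n + 1 - b = n - b + 1 by omega, show n + 1 - a = n - a + 1 by omega]
      ring
    rw [hswap]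
    exact mul_nonneg (by linarith) (by linarith)
  have hlast : 0 ≤ ∑ a ∈ range (n + 1), g a (n + 1) := by
    refine sum_nonneg fun a ha => mul_nonneg ?_ (mul_pos (hc _) (hc _)).le
    have := hzlc.mul_succ_le_succ_mul hz (mem_range_succ_iff.mp ha |>.trans n.le_succ)
    linarith
  have hsplit : ∑ a ∈ range (n + 1), ∑ b ∈ range (n + 2), g a b =
      ∑ a ∈ range (n + 1), ∑ b ∈ range (n + 1), g a b + ∑ a ∈ range (n + 1), g a (n + 1) := by
    rw [sum_congr rfl fun a _ => sum_range_succ (g a) (n + 1), sum_add_distrib]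
  have hmul : 0 ≤ ((n : ℝ) + 1) * (n + 2) * (c (n + 1) ^ 2 - c n * c (n + 2)) := by
    rw [succ_mul_succ_mul_sub_eq_sum hz0 hrec]
    exact (add_nonneg hsquare hlast).trans_eq hsplit.symm
  linarith [nonneg_of_mul_nonneg_right hmul (by positivity)]

theorem logConcave_oneAddXDeriv (hz0 : z 0 = 1) (hz : ∀ j, 0 < z j)
    (hzlc : LogConcave z) (hc : ∀ m, 0 < c m) (hc0 : 2 ≤ c 0)
    (hrec : ∀ m, (m + 1) * c (m + 1) = ∑ i ∈ range (m + 1), z (i + 1) * c (m - i)) :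
    LogConcave (oneAddXDeriv c) := by
  rintro (_ | m)
  · have hc1 : c 1 = z 1 * c 0 := by simpa using hrec 0
    have hc2 : 2 * c 2 = z 1 * c 1 + z 2 * c 0 := by
      have := hrec 1
      rw [sum_range_succ, sum_range_one] at this
      norm_num at this
      linarith
    have hz2 : z 2 ≤ z 1 ^ 2 := by simpa [hz0] using hzlc 0
    have hz1c0 : 0 ≤ z 1 ^ 2 * c 0 := by positivity
    norm_num [oneAddXDeriv]
    rw [hc1] at hc2 ⊢
    nlinarith [mul_le_mul_of_nonneg_right hz2 (hc 0).le, mul_le_mul_of_nonneg_left hc0 hz1c0]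
  · have hcm := logConcave_of_succ_mul_eq_sum hz0 hz hzlc hc hrec (m + 1)
    have hm : ((m : ℝ) + 1) * (m + 3) ≤ (m + 2) ^ 2 := by nlinarith
    simp only [oneAddXDeriv]
    calc (m + 1) * c (m + 1) * ((↑(m + 2) + 1) * c (m + 2 + 1))
        = ((m : ℝ) + 1) * (m + 3) * (c (m + 1) * c (m + 1 + 2)) := by push_cast; ring
      _ ≤ ((m : ℝ) + 2) ^ 2 * c (m + 1 + 1) ^ 2 :=
        mul_le_mul hm hcm (mul_pos (hc _) (hc _)).le (by positivity)
      _ = _ := by push_cast; ring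

end Recursion

theorem contDiff_expIter (k : ℕ) {n : WithTop ℕ∞} : ContDiff ℝ n (expIter k) := by
  induction k with
  | zero => exact contDiff_id
  | succ k ih => exact Real.contDiff_exp.comp ih

theorem deriv_expIter_succ (k : ℕ) :
    deriv (expIter (k + 1)) = deriv (expIter k) * expIter (k + 1) := by
  funext x
  rw [Pi.mul_apply, mul_comm]
  exact deriv_exp ((contDiff_expIter k (n := 1)).differentiable one_ne_zero x)

theorem natCast_le_expIter_zero (k : ℕ) : (k : ℝ) ≤ expIter k 0 := by
  induction k with
  | zero => simp [expIter]
  | succ k ih =>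
    push_cast
    exact le_trans (by linarith) (Real.add_one_le_exp (expIter k 0))

theorem BellB_zero (k : ℕ) : BellB k 0 = expIter k 0 := by
  rw [BellB, iteratedDeriv_zero]

theorem BellB_one (n : ℕ) : BellB 1 n = 1 := by
  rw [BellB, iteratedDeriv_eq_iterate, show expIter 1 = Real.exp from rfl, Real.iter_deriv_exp,
    Real.exp_zero]

theorem BellB_succ_succ (k n : ℕ) :
    BellB (k + 1) (n + 1) =
      ∑ i ∈ range (n + 1), n.choose i * BellB k (i + 1) * BellB (k + 1) (n - i) := by
  rw [BellB, iteratedDeriv_succ', deriv_expIter_succ,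
    iteratedDeriv_mul (contDiff_expIter k).deriv'.contDiffAt (contDiff_expIter _).contDiffAt]
  simp only [← iteratedDeriv_succ', BellB]

noncomputable def bellCoeff (k m : ℕ) : ℝ := BellB k m / m !

theorem oneAddXDeriv_bellCoeff_succ (k m : ℕ) :
    oneAddXDeriv (bellCoeff k) (m + 1) = BellB k (m + 1) / m ! := by
  simp only [oneAddXDeriv, bellCoeff, Nat.factorial_succ]
  push_cast
  field_simp

theorem bellCoeff_succ_recursion (k m : ℕ) :
    (m + 1) * bellCoeff (k + 1) (m + 1) =
      ∑ i ∈ range (m + 1), oneAddXDeriv (bellCoeff k) (i + 1) * bellCoeff (k + 1) (m - i) := by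
  rw [← oneAddXDeriv_succ, oneAddXDeriv_bellCoeff_succ, BellB_succ_succ, sum_div]
  refine sum_congr rfl fun i hi => ?_
  have hi : i ≤ m := mem_range_succ_iff.mp hi
  have hchoose : (m.choose i : ℝ) ≠ 0 := by exact_mod_cast (Nat.choose_pos hi).ne'
  rw [oneAddXDeriv_bellCoeff_succ, bellCoeff, ← Nat.choose_mul_factorial_mul_factorial hi]
  push_cast
  field_simp

theorem bellCoeff_pos {k : ℕ} (hk : 1 ≤ k) (m : ℕ) : 0 < bellCoeff k m := by
  induction k, hk using Nat.le_induction generalizing m with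
  | base => rw [bellCoeff, BellB_one]; positivity
  | succ k hk ih =>
    refine pos_of_succ_mul_eq_sum ?_ (fun i => oneAddXDeriv_pos ih (i + 1))
      (bellCoeff_succ_recursion k) m
    rw [bellCoeff, BellB_zero]
    exact div_pos (Real.exp_pos _) (by positivity)

theorem logConcave_oneAddXDeriv_bellCoeff_one : LogConcave (oneAddXDeriv (bellCoeff 1)) := by
  rintro (_ | m)
  · norm_num [oneAddXDeriv, bellCoeff, BellB_one]
  · simp only [oneAddXDeriv_bellCoeff_succ, BellB_one]
    rw [div_mul_div_comm, one_mul, div_pow, one_pow, one_div_le_one_div (by positivity)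
      (by positivity)]
    norm_cast
    simp only [Nat.factorial_succ]
    have := Nat.factorial_pos m
    nlinarith

theorem logConcave_oneAddXDeriv_bellCoeff {k : ℕ} (hk : 1 ≤ k) :
    LogConcave (oneAddXDeriv (bellCoeff k)) := by
  induction k, hk using Nat.le_induction with
  | base => exact logConcave_oneAddXDeriv_bellCoeff_one
  | succ k hk ih =>
    refine logConcave_oneAddXDeriv rfl (oneAddXDeriv_pos (bellCoeff_pos hk)) ih
      (bellCoeff_pos (by omega)) ?_ (bellCoeff_succ_recursion k)
    rw [bellCoeff, BellB_zero, Nat.factorial_zero, Nat.cast_one, div_one]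
    exact le_trans (by norm_cast; omega) (natCast_le_expIter_zero (k + 1))

/-- For every integer `k ≥ 2`, the sequence `Z` with `Z 0 = 1` and
`Z n = expIter k 0 * bellOrd k n / (n-1)! = BellB k n / (n-1)!` for `n ≥ 1`
is log-concave. -/
theorem BellB_shift_log_concave (k : ℕ) (hk : 2 ≤ k)
    (Z : ℕ → ℝ) (hZ0 : Z 0 = 1)
    (hZ : ∀ n, 1 ≤ n →
      Z n = expIter k 0 * bellOrd k n / (((n - 1)! : ℕ) : ℝ) ∧
        Z n = BellB k n / (((n - 1)! : ℕ) : ℝ)) :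
    ∀ n, Z n * Z (n + 2) ≤ Z (n + 1) ^ 2 := by
  have hZ_eq : Z = oneAddXDeriv (bellCoeff k) := by
    funext n
    rcases n with _ | m
    · exact hZ0
    · rw [(hZ (m + 1) m.succ_pos).2, oneAddXDeriv_bellCoeff_succ, Nat.add_sub_cancel]
  rw [hZ_eq]
  exact logConcave_oneAddXDeriv_bellCoeff (by omega)
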